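/- Let D₁ ⊆ ℝ and D₂ ⊆ ℝ be closed sets, let φ : ℝ² → ℝ be continuously differentiable, and set D := {(x̄, x̃) ∈ ℝ² : x̄ ∈ D₁ and φ(x̄, x̃) ∈ D₂}. Fix x = (x̄, x̃) ∈ D with ∂₂φ(x) ≠ 0 (so that the Jacobian of Φ(x̄, x̃) := (x̄, φ(x̄, x̃)) at x is invertible). Then N¹_D(x) = { (ū + ∂₁φ(x)·ũ, ∂₂φ(x)·ũ) : ū ∈ N¹_{D₁}(x̄) and ũ ∈ N¹_{D₂}(φ(x̄, x̃)) }. -/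

import Mathlib

open Matrix Set Asymptotics
open scoped RealInnerProductSpace NNReal

noncomputable section

/-- `ℝ^d` with the Euclidean inner product and norm. -/
abbrev Vec (d : ℕ) := EuclideanSpace ℝ (Fin d)

/-- real `d × d` matrices. -/
abbrev Mat (d : ℕ) := Matrix (Fin d) (Fin d) ℝ

attribute [local instance] Matrix.normedAddCommGroup Matrix.normedSpace

/-- A matrix acting on a vector of `ℝ^d`. -/
def mv {d : ℕ} (A : Mat d) (u : Vec d) : Vec d := WithLp.toLp 2 (A.mulVec u)

/-- The `j`-th canonical basis vector of `ℝ^d`. -/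
def evec {d : ℕ} (j : Fin d) : Vec d := EuclideanSpace.single j 1

/-- The first-order normal cone `N¹_D(x)`. -/
def normalCone1 {d : ℕ} (D : Set (Vec d)) (x : Vec d) : Set (Vec d) :=
  {u | ∀ ε > (0:ℝ), ∃ δ > (0:ℝ), ∀ y ∈ D, ‖y - x‖ ≤ δ → ⟪u, y - x⟫ ≤ ε * ‖y - x‖}

/-- The second-order normal cone `N²_D(x) ⊆ ℝ^d × S^d`. -/
def normalCone2 {d : ℕ} (D : Set (Vec d)) (x : Vec d) : Set (Vec d × Mat d) :=
  {p | p.2.IsSymm ∧ ∀ ε > (0:ℝ), ∃ δ > (0:ℝ), ∀ y ∈ D, ‖y - x‖ ≤ δ →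
    ⟪p.1, y - x⟫ + (1/2:ℝ) * ⟪y - x, mv p.2 (y - x)⟫ ≤ ε * ‖y - x‖^2}

/-- The first-order normal cone for subsets of `ℝ`. -/
def normalConeR (D : Set ℝ) (x : ℝ) : Set ℝ :=
  {u | ∀ ε > (0:ℝ), ∃ δ > (0:ℝ), ∀ y ∈ D, |y - x| ≤ δ → u * (y - x) ≤ ε * |y - x|}

/-- The matrix of the orthogonal projection of `ℝ^d` onto the column space (range) of `A`,
i.e. `A A⁺` with `A⁺` the Moore–Penrose pseudoinverse. -/
def projRange {d : ℕ} (A : Mat d) : Mat d :=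
  Matrix.toEuclideanLin.symm
    (((LinearMap.range (Matrix.toEuclideanLin A)).subtypeL.comp
      (Submodule.orthogonalProjectionOnto (LinearMap.range (Matrix.toEuclideanLin A)))).toLinearMap)

/-- The element of `ℝ²` with the two given coordinates. -/
def vec2 (a b : ℝ) : Vec 2 := WithLp.toLp 2 ![a, b]

/-- The Hessian matrix of `φ : ℝ^d → ℝ` at `x`. -/
def hessMat {d : ℕ} (φ : Vec d → ℝ) (x : Vec d) : Mat d :=
  Matrix.of fun i j => fderiv ℝ (fun y => fderiv ℝ φ y (evec j)) x (evec i)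


/-!
The map `Φ p = (p 0, φ p)` is strictly differentiable at `x` with invertible derivative, and
`D = Φ ⁻¹' (D₁ ×ˢ D₂)`. Fréchet normals pull back along any map differentiable at the base point
(through composition with its derivative); applying this to `Φ` and to its local inverse shows
that the normals of `D` at `x` are exactly `ℓ ∘ DΦ(x)` for `ℓ` normal to `D₁ ×ˢ D₂` at `Φ x`, and
the normals of a product are the pairs of normals of the factors.
-/

open Filter Topology

section FrechetNormal

variable {E F : Type*} [NormedAddCommGroup E] [NormedSpace ℝ E]
  [NormedAddCommGroup F] [NormedSpace ℝ F]

/-- Normals are continuous linear functionals; `ℓ` is normal to `s` at `x` when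
`limsup_{y →[s] x} ℓ (y - x) / ‖y - x‖ ≤ 0`. -/
def frechetNormal (s : Set E) (x : E) : Set (E →L[ℝ] ℝ) :=
  {ℓ | (fun y => (ℓ (y - x))⁺) =o[𝓝[s] x] fun y => y - x}

theorem mem_frechetNormal_iff {s : Set E} {x : E} {ℓ : E →L[ℝ] ℝ} :
    ℓ ∈ frechetNormal s x ↔
      ∀ ε > (0 : ℝ), ∃ δ > (0 : ℝ), ∀ y ∈ s, ‖y - x‖ ≤ δ → ℓ (y - x) ≤ ε * ‖y - x‖ := by
  have hbasis := nhdsWithin_hasBasis (Metric.nhds_basis_closedBall (x := x)) s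
  simp only [frechetNormal, Set.mem_ofPred_eq, isLittleO_iff, hbasis.eventually_iff,
    Set.mem_inter_iff, Metric.mem_closedBall, dist_eq_norm, and_imp]
  refine forall₂_congr fun ε _ => exists_congr fun δ => and_congr_right fun _ =>
    forall_congr' fun y => ?_
  rw [Real.norm_eq_abs, abs_of_nonneg (posPart_nonneg _), posPart_def, sup_le_iff,
    and_iff_left (by positivity)]
  exact ⟨fun h hyδ hy => h hy hyδ, fun h hy hyδ => h hyδ hy⟩

theorem HasFDerivAt.comp_mem_frechetNormal {f : E → F} {f' : E →L[ℝ] F} {x : E}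
    {s : Set E} {t : Set F} {ℓ : F →L[ℝ] ℝ} (hf : HasFDerivAt f f' x)
    (hst : ∀ᶠ y in 𝓝[s] x, f y ∈ t) (hℓ : ℓ ∈ frechetNormal t (f x)) :
    ℓ.comp f' ∈ frechetNormal s x := by
  have htend : Tendsto f (𝓝[s] x) (𝓝[t] (f x)) :=
    tendsto_nhdsWithin_iff.2 ⟨hf.continuousAt.tendsto.mono_left nhdsWithin_le_nhds, hst⟩
  have hmain : (fun y => (ℓ (f y - f x))⁺) =o[𝓝[s] x] fun y => y - x :=
    (hℓ.comp_tendsto htend).trans_isBigO (hf.isBigO_sub.mono nhdsWithin_le_nhds)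
  have hrem : (fun y => ℓ (f y - f x - f' (y - x))) =o[𝓝[s] x] fun y => y - x :=
    ((ℓ.isBigO_comp _ _).trans_isLittleO hf.isLittleO).mono nhdsWithin_le_nhds
  refine (isBigO_of_le _ fun y => ?_).trans_isLittleO (hmain.add (isLittleO_abs_left.2 hrem))
  have hsplit : ℓ (f' (y - x)) = ℓ (f y - f x) - ℓ (f y - f x - f' (y - x)) := by
    rw [map_sub ℓ (f y - f x), sub_sub_cancel]
  rw [ContinuousLinearMap.comp_apply, hsplit, Real.norm_eq_abs, Real.norm_eq_abs,
    abs_of_nonneg (posPart_nonneg _), abs_of_nonneg (by positivity), posPart_def, sup_le_iff]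
  exact ⟨by linarith [le_posPart (ℓ (f y - f x)), neg_abs_le (ℓ (f y - f x - f' (y - x)))],
    by positivity⟩

theorem mem_frechetNormal_prod_iff {s : Set E} {t : Set F} {a : E} {b : F}
    {ℓ : E × F →L[ℝ] ℝ} (ha : a ∈ s) (hb : b ∈ t) :
    ℓ ∈ frechetNormal (s ×ˢ t) (a, b) ↔
      ℓ.comp (.inl ℝ E F) ∈ frechetNormal s a ∧ ℓ.comp (.inr ℝ E F) ∈ frechetNormal t b := by
  refine ⟨fun hℓ => ⟨?_, ?_⟩, fun ⟨h₁, h₂⟩ => ?_⟩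
  · refine (hasFDerivAt_prodMk_left a b).comp_mem_frechetNormal ?_ hℓ
    filter_upwards [self_mem_nhdsWithin] with y hy using ⟨hy, hb⟩
  · refine (hasFDerivAt_prodMk_right a b).comp_mem_frechetNormal ?_ hℓ
    filter_upwards [self_mem_nhdsWithin] with y hy using ⟨ha, hy⟩
  rw [frechetNormal, Set.mem_ofPred_eq, nhdsWithin_prod_eq] at *
  have h₁' : (fun p : E × F => (ℓ (p.1 - a, 0))⁺) =o[𝓝[s] a ×ˢ 𝓝[t] b] fun p => p - (a, b) :=
    (h₁.comp_tendsto tendsto_fst).trans_isBigO isBigO_fst_prod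
  have h₂' : (fun p : E × F => (ℓ (0, p.2 - b))⁺) =o[𝓝[s] a ×ˢ 𝓝[t] b] fun p => p - (a, b) :=
    (h₂.comp_tendsto tendsto_snd).trans_isBigO isBigO_snd_prod
  refine (isBigO_of_le _ fun p => ?_).trans_isLittleO (h₁'.add h₂')
  rw [← ContinuousLinearMap.comp_inl_add_comp_inr ℓ (p - (a, b))]
  simp only [Prod.fst_sub, Prod.snd_sub, Real.norm_eq_abs]
  rw [abs_of_nonneg (posPart_nonneg _), abs_of_nonneg (by positivity), posPart_def, sup_le_iff]
  exact ⟨add_le_add (le_posPart _) (le_posPart _), by positivity⟩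

theorem frechetNormal_preimage_of_hasStrictFDerivAt [CompleteSpace E] {f : E → F}
    {e : E ≃L[ℝ] F} {x : E} (hf : HasStrictFDerivAt f (e : E →L[ℝ] F) x) (t : Set F) :
    frechetNormal (f ⁻¹' t) x = (fun ℓ => ℓ.comp (e : E →L[ℝ] F)) '' frechetNormal t (f x) := by
  ext ℓ
  refine ⟨fun hℓ => ⟨ℓ.comp (e.symm : F →L[ℝ] E), ?_, ?_⟩, ?_⟩
  · set g := hf.localInverse f e x
    have hgx : g (f x) = x := hf.localInverse_apply_image
    refine hf.to_localInverse.hasFDerivAt.comp_mem_frechetNormal ?_ (hgx.symm ▸ hℓ)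
    filter_upwards [nhdsWithin_le_nhds hf.eventually_right_inverse, self_mem_nhdsWithin]
      with q hq hqt
    exact (hq.symm ▸ hqt : f (g q) ∈ t)
  · ext v; simp
  · rintro ⟨ℓ, hℓ, rfl⟩
    exact hf.hasFDerivAt.comp_mem_frechetNormal self_mem_nhdsWithin hℓ

end FrechetNormal

theorem mem_normalCone1_iff {d : ℕ} {D : Set (Vec d)} {x u : Vec d} :
    u ∈ normalCone1 D x ↔ innerSL ℝ u ∈ frechetNormal D x := by
  rw [mem_frechetNormal_iff]; rfl

theorem mem_normalConeR_iff {C : Set ℝ} {a : ℝ} {ℓ : ℝ →L[ℝ] ℝ} :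
    ℓ 1 ∈ normalConeR C a ↔ ℓ ∈ frechetNormal C a := by
  simp only [mem_frechetNormal_iff, normalConeR, Set.mem_ofPred_eq, Real.norm_eq_abs]
  refine forall₂_congr fun ε _ => exists_congr fun δ => and_congr_right fun _ =>
    forall₂_congr fun y _ => imp_congr_right fun _ => ?_
  rw [mul_comm, ← smul_eq_mul (y - a), ← map_smul, smul_eq_mul, mul_one]

theorem apply_eq_sum_coord_mul_evec {d : ℕ} (ψ : Vec d →L[ℝ] ℝ) (v : Vec d) :
    ψ v = ∑ i, v i * ψ (evec i) := by
  conv_lhs => rw [← (EuclideanSpace.basisFun (Fin d) ℝ).sum_repr v]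
  simp [evec, map_sum]

section ProjProd

variable (ψ : Vec 2 →L[ℝ] ℝ)

theorem injective_proj_prod (hψ : ψ (evec 1) ≠ 0) :
    Function.Injective ((EuclideanSpace.proj (0 : Fin 2)).prod ψ) := by
  rw [injective_iff_map_eq_zero]
  intro v hv
  simp only [ContinuousLinearMap.prod_apply, Prod.mk_eq_zero, PiLp.proj_apply] at hv
  obtain ⟨h0, h1⟩ := hv
  rw [apply_eq_sum_coord_mul_evec, Fin.sum_univ_two, h0, zero_mul, zero_add,
    mul_eq_zero, or_iff_left hψ] at h1
  ext i; fin_cases i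
  exacts [h0, h1]

theorem comp_proj_prod_apply (ℓ : ℝ × ℝ →L[ℝ] ℝ) (v : Vec 2) :
    ℓ.comp ((EuclideanSpace.proj (0 : Fin 2)).prod ψ) v =
      ⟪vec2 (ℓ (1, 0) + ψ (evec 0) * ℓ (0, 1)) (ψ (evec 1) * ℓ (0, 1)), v⟫ := by
  have hℓ (p q : ℝ) : ℓ (p, q) = p * ℓ (1, 0) + q * ℓ (0, 1) := by
    rw [← smul_eq_mul p, ← smul_eq_mul q, ← map_smul, ← map_smul, ← map_add]
    simp
  rw [ContinuousLinearMap.comp_apply, ContinuousLinearMap.prod_apply, PiLp.proj_apply, hℓ,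
    apply_eq_sum_coord_mul_evec ψ v, Fin.sum_univ_two]
  simp [vec2, PiLp.inner_apply, Fin.sum_univ_two]
  ring

end ProjProd

theorem stmt5 (D₁ D₂ : Set ℝ)
    (φ : Vec 2 → ℝ) (hφ : ContDiff ℝ 1 φ)
    (D : Set (Vec 2)) (hD : D = {p : Vec 2 | p 0 ∈ D₁ ∧ φ p ∈ D₂})
    (x : Vec 2) (hx : x ∈ D) (hnd : fderiv ℝ φ x (evec 1) ≠ 0) :
    normalCone1 D x =
      {w : Vec 2 | ∃ ub ∈ normalConeR D₁ (x 0), ∃ ut ∈ normalConeR D₂ (φ x),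
        w = vec2 (ub + fderiv ℝ φ x (evec 0) * ut) (fderiv ℝ φ x (evec 1) * ut)} := by
  obtain ⟨hx₁, hx₂⟩ : x 0 ∈ D₁ ∧ φ x ∈ D₂ := by rwa [hD] at hx
  let e : Vec 2 ≃L[ℝ] ℝ × ℝ := (LinearMap.linearEquivOfInjective _
    (injective_proj_prod _ hnd) (by simp)).toContinuousLinearEquiv
  have he : (e : Vec 2 →L[ℝ] ℝ × ℝ) = (EuclideanSpace.proj (0 : Fin 2)).prod (fderiv ℝ φ x) := rfl
  have hΦ : HasStrictFDerivAt (fun p : Vec 2 => (p 0, φ p)) (e : Vec 2 →L[ℝ] ℝ × ℝ) x :=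
    (EuclideanSpace.proj (0 : Fin 2)).hasStrictFDerivAt.prodMk
      (hφ.contDiffAt.hasStrictFDerivAt one_ne_zero)
  have hD' : D = (fun p : Vec 2 => (p 0, φ p)) ⁻¹' (D₁ ×ˢ D₂) := hD
  ext w
  rw [mem_normalCone1_iff, hD', frechetNormal_preimage_of_hasStrictFDerivAt hΦ, he]
  constructor
  · rintro ⟨ℓ, hℓ, hw⟩
    rw [mem_frechetNormal_prod_iff hx₁ hx₂] at hℓ
    refine ⟨ℓ (1, 0), mem_normalConeR_iff.2 hℓ.1, ℓ (0, 1), mem_normalConeR_iff.2 hℓ.2,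
      ext_inner_right ℝ fun v => ?_⟩
    rw [← comp_proj_prod_apply, ← innerSL_apply_apply, ← hw]
  · rintro ⟨ub, hub, ut, hut, rfl⟩
    refine ⟨ub • .fst ℝ ℝ ℝ + ut • .snd ℝ ℝ ℝ, (mem_frechetNormal_prod_iff hx₁ hx₂).2
      ⟨mem_normalConeR_iff.1 (by simpa using hub), mem_normalConeR_iff.1 (by simpa using hut)⟩, ?_⟩
    ext v
    simpa using comp_proj_prod_apply (fderiv ℝ φ x) (ub • .fst ℝ ℝ ℝ + ut • .snd ℝ ℝ ℝ) v
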